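/- Let K be a totally real number field, p ≥ 5 a rational prime, d ∈ O_K \ {0} 5-th power free, and let (a, b, c) ∈ O_K³ be a nontrivial primitive solution of a⁵ + b⁵ = d·c^p. Set Δ = 2⁴·5³·(a + b)²·(a⁵ + b⁵)² and c₄ = 2⁴·5·(5·(a² + b²)² − 3·φ₅(a, b)). Then for every prime ideal q of O_K with q ∤ 10·d: p divides v_q(Δ), and if v_q(Δ) > 0 then v_q(c₄) = 0. -/

import Mathlib

open IsDedekindDomain NumberField

-- The additive `P`-adic valuation on a number field `F`, normalized so that a uniformizer
-- has valuation `1`; by convention `vP P 0 = 0`.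
open scoped Classical in
noncomputable def vP {F : Type*} [Field F] [NumberField F]
    (P : HeightOneSpectrum (𝓞 F)) (x : F) : ℤ :=
  if hx : x = 0 then 0
  else - Multiplicative.toAdd (WithZero.unzero ((Valuation.ne_zero_iff (P.valuation F)).mpr hx))

-- A number field is totally real if all its infinite places are real.
def TotallyReal (F : Type*) [Field F] [NumberField F] : Prop :=
  ∀ v : NumberField.InfinitePlace F, v.IsReal

/-!
Away from `10d` the only primes that can divide `Δ` are those dividing
`a⁵ + b⁵ = (a + b) φ₅(a, b) = d cᵖ`. By primitivity `q` does not divide both `a` and `b`, and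
since `φ₅(a, b) ≡ 5a⁴ (mod a + b)` it cannot divide both `a + b` and `φ₅(a, b)`; hence
`v_q(a + b)` is `0` or `p v_q(c)`, and `v_q(Δ) = 2 v_q(a + b) + 2p v_q(c)`. If `q ∣ Δ`, the same
kind of congruences (modulo `a + b`, resp. modulo `φ₅(a, b)`) show `q ∤ c₄ / 80`.
-/

def phi5 {R : Type*} [CommRing R] (a b : R) : R :=
  a ^ 4 - a ^ 3 * b + a ^ 2 * b ^ 2 - a * b ^ 3 + b ^ 4

lemma add_pow_five_eq {R : Type*} [CommRing R] (a b : R) : a ^ 5 + b ^ 5 = (a + b) * phi5 a b := by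
  unfold phi5; ring

section PrimeIdeal

variable {R : Type*} [CommRing R] {P : Ideal R} [P.IsPrime] {a b : R}

lemma notMem_of_mem_of_span_eq_top {c d : R} {n : ℕ} (hprim : Ideal.span {a, b, c} = ⊤)
    (heq : a ^ 5 + b ^ 5 = d * c ^ n) (hd : d ∉ P) (ha : a ∈ P) : b ∉ P := by
  intro hb
  have hsum : d * c ^ n ∈ P := heq ▸ P.add_mem (P.pow_mem_of_mem ha 5 (by norm_num))
    (P.pow_mem_of_mem hb 5 (by norm_num))
  have hc : c ∈ P := ‹P.IsPrime›.mem_of_pow_mem n ((Ideal.IsPrime.mul_mem_left_iff hd).mp hsum)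
  have hle : Ideal.span {a, b, c} ≤ P := by
    simp [Ideal.span_le, Set.insert_subset_iff, ha, hb, hc]
  exact ‹P.IsPrime›.ne_top (top_le_iff.mp (hprim ▸ hle))

lemma notMem_of_eq_five_mul_pow_four_add {x g : R} (h5 : (5 : R) ∉ P) (hab : a ∈ P → b ∉ P)
    (hsum : a + b ∈ P) (hx : x = 5 * a ^ 4 + (a + b) * g) : x ∉ P := by
  intro h
  rw [hx, P.add_mem_iff_left (P.mul_mem_right g hsum), Ideal.IsPrime.mul_mem_left_iff h5] at h
  have ha : a ∈ P := ‹P.IsPrime›.mem_of_pow_mem 4 h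
  exact hab ha (by simpa using P.sub_mem hsum ha)

lemma phi5_notMem_of_add_mem (h5 : (5 : R) ∉ P) (hab : a ∈ P → b ∉ P) (hsum : a + b ∈ P) :
    phi5 a b ∉ P :=
  notMem_of_eq_five_mul_pow_four_add h5 hab hsum
    (g := b ^ 3 - 2 * a * b ^ 2 + 3 * a ^ 2 * b - 4 * a ^ 3) (by unfold phi5; ring)

/-- With `s = a² + b²` and `t = ab` one has `φ₅ = s² - st - t²`, `c₄ / 80 = 5s² - 3φ₅` and
`a³ = as - bt`, `b³ = bs - at`. -/
lemma c4_factor_notMem_of_phi5_mem (h5 : (5 : R) ∉ P) (hab : a ∈ P → b ∉ P)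
    (hφ : phi5 a b ∈ P) : 5 * (a ^ 2 + b ^ 2) ^ 2 - 3 * phi5 a b ∉ P := by
  intro hE
  have hs : a ^ 2 + b ^ 2 ∈ P := by
    refine ‹P.IsPrime›.mem_of_pow_mem 2 ((Ideal.IsPrime.mul_mem_left_iff h5).mp ?_)
    simpa using P.add_mem hE (P.mul_mem_left 3 hφ)
  have ht : a * b ∈ P := by
    refine ‹P.IsPrime›.mem_of_pow_mem 2 ?_
    have key : (a * b) ^ 2 = (a ^ 2 + b ^ 2) * (a ^ 2 + b ^ 2 - a * b) - phi5 a b := by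
      unfold phi5; ring
    exact key ▸ P.sub_mem (P.mul_mem_right _ hs) hφ
  have ha : a ^ 3 ∈ P := by
    rw [show a ^ 3 = a * (a ^ 2 + b ^ 2) - b * (a * b) by ring]
    exact P.sub_mem (P.mul_mem_left _ hs) (P.mul_mem_left _ ht)
  have hb : b ^ 3 ∈ P := by
    rw [show b ^ 3 = b * (a ^ 2 + b ^ 2) - a * (a * b) by ring]
    exact P.sub_mem (P.mul_mem_left _ hs) (P.mul_mem_left _ ht)
  exact hab (‹P.IsPrime›.mem_of_pow_mem 3 ha) (‹P.IsPrime›.mem_of_pow_mem 3 hb)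

lemma c4_factor_notMem (h5 : (5 : R) ∉ P) (hab : a ∈ P → b ∉ P) (h : a ^ 5 + b ^ 5 ∈ P) :
    5 * (a ^ 2 + b ^ 2) ^ 2 - 3 * phi5 a b ∉ P := by
  rw [add_pow_five_eq] at h
  rcases ‹P.IsPrime›.mem_or_mem h with hsum | hφ
  · exact notMem_of_eq_five_mul_pow_four_add h5 hab hsum
      (g := 2 * b ^ 3 + a * b ^ 2 + 6 * a ^ 2 * b - 3 * a ^ 3) (by unfold phi5; ring)
  · exact c4_factor_notMem_of_phi5_mem h5 hab hφ

lemma frey_c4_notMem_of_disc_mem (h2 : (2 : R) ∉ P) (h5 : (5 : R) ∉ P) (hab : a ∈ P → b ∉ P)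
    (hΔ : 2 ^ 4 * 5 ^ 3 * (a + b) ^ 2 * (a ^ 5 + b ^ 5) ^ 2 ∈ P) :
    2 ^ 4 * 5 * (5 * (a ^ 2 + b ^ 2) ^ 2 - 3 * phi5 a b) ∉ P := by
  have hsum : a ^ 5 + b ^ 5 ∈ P := by
    rcases ‹P.IsPrime›.mem_or_mem hΔ with h | h
    · have hu : (2 ^ 4 * 5 ^ 3 : R) ∈ P.primeCompl := mul_mem (pow_mem h2 4) (pow_mem h5 3)
      have hplus := ‹P.IsPrime›.mem_of_pow_mem 2 ((Ideal.IsPrime.mul_mem_left_iff hu).mp h)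
      exact add_pow_five_eq a b ▸ P.mul_mem_right _ hplus
    · exact ‹P.IsPrime›.mem_of_pow_mem 2 h
  exact ‹P.IsPrime›.mul_notMem (mul_mem (pow_mem h2 4) h5 : _ ∈ P.primeCompl)
    (c4_factor_notMem h5 hab hsum)

end PrimeIdeal

section Valuation

variable {F : Type*} [Field F] [NumberField F] (q : HeightOneSpectrum (𝓞 F))

lemma vP_eq_neg_log (x : F) : vP q x = -WithZero.log (q.valuation F x) := by
  unfold vP
  split_ifs with hx
  · simp [hx]
  · rw [WithZero.toAdd_unzero_eq_log]

lemma vP_coe_mul {x y : 𝓞 F} (hx : x ≠ 0) (hy : y ≠ 0) :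
    vP q ((x * y : 𝓞 F) : F) = vP q (x : F) + vP q (y : F) := by
  have hxF : q.valuation F (x : F) ≠ 0 := by simpa using hx
  have hyF : q.valuation F (y : F) ≠ 0 := by simpa using hy
  push_cast
  simp only [vP_eq_neg_log, map_mul, WithZero.log_mul hxF hyF]
  ring

lemma vP_coe_pow (x : 𝓞 F) (n : ℕ) : vP q ((x ^ n : 𝓞 F) : F) = n * vP q (x : F) := by
  simp [vP_eq_neg_log]

lemma vP_coe_eq_zero {x : 𝓞 F} (hx : x ∉ q.asIdeal) : vP q (x : F) = 0 := by
  rw [vP_eq_neg_log, RingOfIntegers.coe_eq_algebraMap,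
    (q.valuation_eq_one_iff_notMem (K := F)).mpr hx, WithZero.log_one, neg_zero]

lemma mem_of_vP_coe_pos {x : 𝓞 F} (hx : 0 < vP q (x : F)) : x ∈ q.asIdeal := by
  by_contra h
  exact hx.ne' (vP_coe_eq_zero q h)

lemma vP_coe_mul_of_notMem {u x : 𝓞 F} (hu : u ∉ q.asIdeal) (hx : x ≠ 0) :
    vP q ((u * x : 𝓞 F) : F) = vP q (x : F) := by
  rw [vP_coe_mul q (by rintro rfl; exact hu q.asIdeal.zero_mem) hx, vP_coe_eq_zero q hu, zero_add]

lemma dvd_vP_coe_of_dvd_vP_coe_mul {x y : 𝓞 F} {n : ℤ} (hx : x ≠ 0)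
    (hxy : x ∈ q.asIdeal → y ∉ q.asIdeal) (h : n ∣ vP q ((x * y : 𝓞 F) : F)) :
    n ∣ vP q (x : F) := by
  by_cases hxq : x ∈ q.asIdeal
  · rwa [mul_comm, vP_coe_mul_of_notMem q (hxy hxq) hx] at h
  · simp [vP_coe_eq_zero q hxq]

lemma dvd_vP_frey_disc {a b c d : 𝓞 F} {n : ℕ} (heq : a ^ 5 + b ^ 5 = d * c ^ n) (hc : c ≠ 0)
    (hd : d ∉ q.asIdeal) (h2 : (2 : 𝓞 F) ∉ q.asIdeal) (h5 : (5 : 𝓞 F) ∉ q.asIdeal)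
    (hab : a ∈ q.asIdeal → b ∉ q.asIdeal) :
    (n : ℤ) ∣ vP q ((2 ^ 4 * 5 ^ 3 * (a + b) ^ 2 * (a ^ 5 + b ^ 5) ^ 2 : 𝓞 F) : F) := by
  have hsum0 : a ^ 5 + b ^ 5 ≠ 0 :=
    heq ▸ mul_ne_zero (by rintro rfl; exact hd q.asIdeal.zero_mem) (pow_ne_zero n hc)
  have hplus0 : a + b ≠ 0 := left_ne_zero_of_mul (add_pow_five_eq a b ▸ hsum0)
  have hvsum : vP q ((a ^ 5 + b ^ 5 : 𝓞 F) : F) = n * vP q (c : F) := by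
    rw [heq, vP_coe_mul_of_notMem q hd (pow_ne_zero n hc), vP_coe_pow]
  have hvplus : (n : ℤ) ∣ vP q ((a + b : 𝓞 F) : F) :=
    dvd_vP_coe_of_dvd_vP_coe_mul q hplus0 (phi5_notMem_of_add_mem h5 hab)
      (add_pow_five_eq a b ▸ hvsum ▸ dvd_mul_right _ _)
  have hu : (2 ^ 4 * 5 ^ 3 : 𝓞 F) ∈ q.asIdeal.primeCompl := mul_mem (pow_mem h2 4) (pow_mem h5 3)
  rw [mul_assoc, vP_coe_mul_of_notMem q hu
      (mul_ne_zero (pow_ne_zero 2 hplus0) (pow_ne_zero 2 hsum0)),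
    vP_coe_mul q (pow_ne_zero 2 hplus0) (pow_ne_zero 2 hsum0), vP_coe_pow, vP_coe_pow, hvsum]
  exact dvd_add (dvd_mul_of_dvd_right hvplus 2) (dvd_mul_of_dvd_right (dvd_mul_right _ _) 2)

end Valuation

theorem frey55p_semistable_outside_S_general
    (K : Type*) [Field K] [NumberField K]
    (p : ℕ)
    (d : 𝓞 K)
    -- `(a, b, c)` is a nontrivial primitive solution of `a⁵ + b⁵ = d·c^p`
    (a b c : 𝓞 K)
    (heq : a ^ 5 + b ^ 5 = d * c ^ p)
    (hnt : a * b * c ≠ 0)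
    (hprim : Ideal.span {a, b, c} = ⊤)
    -- `Δ` and `c₄` of the Frey curve
    (Δ c₄ : 𝓞 K)
    (hΔ : Δ = 2 ^ 4 * 5 ^ 3 * (a + b) ^ 2 * (a ^ 5 + b ^ 5) ^ 2)
    (hc₄ : c₄ = 2 ^ 4 * 5 * (5 * (a ^ 2 + b ^ 2) ^ 2 -
      3 * (a ^ 4 - a ^ 3 * b + a ^ 2 * b ^ 2 - a * b ^ 3 + b ^ 4))) :
    ∀ q : HeightOneSpectrum (𝓞 K), 10 * d ∉ q.asIdeal →
      (p : ℤ) ∣ vP q (Δ : K) ∧ (0 < vP q (Δ : K) → vP q (c₄ : K) = 0) := by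
  intro q hq
  have hP : q.asIdeal.IsPrime := q.isPrime
  obtain ⟨h10, hd⟩ := not_or.mp (mt hP.mul_mem_iff_mem_or_mem.mpr hq)
  obtain ⟨h2, h5⟩ := not_or.mp (mt hP.mul_mem_iff_mem_or_mem.mpr
    (show (10 : 𝓞 K) = 2 * 5 by norm_num ▸ h10))
  have hab : a ∈ q.asIdeal → b ∉ q.asIdeal := notMem_of_mem_of_span_eq_top hprim heq hd
  refine ⟨hΔ ▸ dvd_vP_frey_disc q heq (right_ne_zero_of_mul hnt) hd h2 h5 hab, fun hpos => ?_⟩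
  exact vP_coe_eq_zero q
    (hc₄ ▸ frey_c4_notMem_of_disc_mem h2 h5 hab (hΔ ▸ mem_of_vP_coe_pos q hpos))

/-- Lemma 4.3 of the paper: semistability of the Frey curve
`y² = x³ − 5(a² + b²)x² + 5φ₅(a,b)x` away from `S_{K,10d}`, via `Δ` and `c₄`. -/
theorem frey55p_semistable_outside_S
    (K : Type*) [Field K] [NumberField K] (hK : TotallyReal K)
    (p : ℕ) (hp : p.Prime) (hp5 : 5 ≤ p)
    (d : 𝓞 K) (hd0 : d ≠ 0)
    -- `d` is 5-th power free
    (hd5 : ∀ q : HeightOneSpectrum (𝓞 K), ¬ q.asIdeal ^ 5 ∣ Ideal.span {d})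
    -- `(a, b, c)` is a nontrivial primitive solution of `a⁵ + b⁵ = d·c^p`
    (a b c : 𝓞 K)
    (heq : a ^ 5 + b ^ 5 = d * c ^ p)
    (hnt : a * b * c ≠ 0)
    (hprim : Ideal.span {a, b, c} = ⊤)
    -- `Δ` and `c₄` of the Frey curve
    (Δ c₄ : 𝓞 K)
    (hΔ : Δ = 2 ^ 4 * 5 ^ 3 * (a + b) ^ 2 * (a ^ 5 + b ^ 5) ^ 2)
    (hc₄ : c₄ = 2 ^ 4 * 5 * (5 * (a ^ 2 + b ^ 2) ^ 2 -
      3 * (a ^ 4 - a ^ 3 * b + a ^ 2 * b ^ 2 - a * b ^ 3 + b ^ 4))) :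
    ∀ q : HeightOneSpectrum (𝓞 K), 10 * d ∉ q.asIdeal →
      (p : ℤ) ∣ vP q (Δ : K) ∧ (0 < vP q (Δ : K) → vP q (c₄ : K) = 0) :=
  frey55p_semistable_outside_S_general K p d a b c heq hnt hprim Δ c₄ hΔ hc₄
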